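/- arXiv:1911.03146 — 2 statements merged into one kernel-verified Lean document; each statement's English description precedes it below -/
import Mathlib

section
/- Let d ≥ 1 be a natural number and let F_d := ∏_{i=0}^{d} (1 + (d−i)·X + i·Y) in ℤ[X,Y]. Then there exists a two-variable polynomial R ∈ ℤ[S,T] all of whose coefficients are nonnegative such that F_d = R(e₁, e₂), where e₁ = X+Y and e₂ = X·Y; that is, the total Chern class of Sym^d of a rank-2 bundle is a polynomial with nonnegative integer coefficients in c₁ and c₂. -/
open MvPolynomial Finset

/-- `Xp` is the first Chern root. -/
noncomputable def Xp : MvPolynomial (Fin 2) ℤ := MvPolynomial.X 0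
/-- `Yp` is the second Chern root. -/
noncomputable def Yp : MvPolynomial (Fin 2) ℤ := MvPolynomial.X 1

/-- `F d` is the total Chern class of `Sym^d` of a rank-2 bundle with Chern
roots `X`, `Y`. -/
noncomputable def F (d : ℕ) : MvPolynomial (Fin 2) ℤ :=
  ∏ i ∈ Finset.range (d + 1), (1 + C ((d : ℤ) - (i : ℤ)) * Xp + C (i : ℤ) * Yp)

/-- `e₁ = X + Y` plays the role of `c₁`. -/
noncomputable def e1 : MvPolynomial (Fin 2) ℤ := Xp + Yp
/-- `e₂ = X·Y` plays the role of `c₂`. -/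
noncomputable def e2 : MvPolynomial (Fin 2) ℤ := Xp * Yp

/-! The weights of `Sym^d` are `(d - i) X + i Y`, and the weights `i` and `d - i` pair up:
`(1 + (b + k) X + b Y) (1 + b X + (b + k) Y) = 1 + (2b + k) e₁ + b (b + k) e₁² + k² e₂`,
while for even `d` the unpaired middle factor is `1 + (d/2) e₁`. So `F d` lies in the
subsemiring generated by `e₁` and `e₂`, which is the image under `aeval ![e₁, e₂]` of a
subsemiring of polynomials with nonnegative coefficients. -/

namespace MvPolynomial

variable (σ R : Type*) [CommSemiring R] [PartialOrder R] [IsOrderedRing R]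

def nonnegCoeffs : Subsemiring (MvPolynomial σ R) where
  carrier := {p | ∀ m, 0 ≤ p.coeff m}
  mul_mem' {p q} hp hq m := by
    classical
    rw [coeff_mul]
    exact sum_nonneg fun x _ => mul_nonneg (hp x.1) (hq x.2)
  one_mem' m := by
    classical
    rw [coeff_one]
    split_ifs <;> simp
  add_mem' hp hq m := by
    rw [coeff_add]
    exact add_nonneg (hp m) (hq m)
  zero_mem' m := by simp

variable {σ R}

theorem X_mem_nonnegCoeffs (i : σ) : X i ∈ nonnegCoeffs σ R := by
  classical
  intro m
  rw [coeff_X]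
  split_ifs <;> simp

end MvPolynomial

theorem prod_range_mem_of_pairs {M A : Type*} [CommMonoid M] [SetLike A M] [SubmonoidClass A M]
    (S : A) {f : ℕ → M} {c : ℕ} (hpair : ∀ i j, i + j = c → i < j → f i * f j ∈ S)
    (hmid : ∀ i, i + i = c → f i ∈ S) : ∏ i ∈ range (c + 1), f i ∈ S := by
  suffices h : ∀ k a, 2 * a + k = c + 1 → ∏ i ∈ Ico a (a + k), f i ∈ S by
    rw [range_eq_Ico, ← zero_add (c + 1)]
    exact h (c + 1) 0 (by omega)
  intro k
  induction k using Nat.twoStepInduction with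
  | zero => intro a _; simp
  | one => intro a ha; simpa using hmid a (by omega)
  | more k ih _ =>
    intro a ha
    have hsplit : ∏ i ∈ Ico a (a + (k + 2)), f i
        = f a * f (a + k + 1) * ∏ i ∈ Ico (a + 1) (a + 1 + k), f i := by
      rw [show a + (k + 2) = a + k + 1 + 1 by omega, prod_Ico_succ_top (by omega),
        prod_eq_prod_Ico_succ_bot (by omega), show a + 1 + k = a + k + 1 by omega]
      exact mul_right_comm _ _ _
    rw [hsplit]
    exact mul_mem (hpair _ _ (by omega) (by omega)) (ih (a + 1) (by omega))

noncomputable def weightFactor (a b : ℕ) : MvPolynomial (Fin 2) ℤ := 1 + a * Xp + b * Yp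

theorem F_eq_prod_weightFactor (d : ℕ) : F d = ∏ i ∈ range (d + 1), weightFactor (d - i) i := by
  refine prod_congr rfl fun i hi => ?_
  rw [weightFactor, ← Nat.cast_sub (mem_range_succ_iff.1 hi), map_natCast, map_natCast]

theorem weightFactor_self (b : ℕ) : weightFactor b b = 1 + b * e1 := by
  rw [weightFactor, e1]
  ring

theorem weightFactor_mul_weightFactor_swap (b k : ℕ) :
    weightFactor (b + k) b * weightFactor b (b + k)
      = 1 + (2 * b + k : ℕ) * e1 + (b * (b + k) : ℕ) * e1 ^ 2 + (k ^ 2 : ℕ) * e2 := by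
  simp only [weightFactor, e1, e2]
  push_cast
  ring

noncomputable def e1e2Closure : Subsemiring (MvPolynomial (Fin 2) ℤ) :=
  Subsemiring.closure {e1, e2}

theorem e1_mem_e1e2Closure : e1 ∈ e1e2Closure :=
  Subsemiring.subset_closure (Set.mem_insert _ _)

theorem e2_mem_e1e2Closure : e2 ∈ e1e2Closure :=
  Subsemiring.subset_closure (Set.mem_insert_of_mem _ rfl)

theorem F_mem_e1e2Closure (d : ℕ) : F d ∈ e1e2Closure := by
  have h1 := e1_mem_e1e2Closure
  have h2 := e2_mem_e1e2Closure
  rw [F_eq_prod_weightFactor]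
  refine prod_range_mem_of_pairs _ (fun i j hij hlt => ?_) (fun i hi => ?_)
  · obtain ⟨k, rfl⟩ := Nat.exists_eq_add_of_le hlt.le
    rw [show d - i = i + k by omega, show d - (i + k) = i by omega,
      weightFactor_mul_weightFactor_swap]
    exact add_mem (add_mem (add_mem (one_mem _) (mul_mem (natCast_mem _ _) h1))
      (mul_mem (natCast_mem _ _) (pow_mem h1 2))) (mul_mem (natCast_mem _ _) h2)
  · rw [show d - i = i by omega, weightFactor_self]
    exact add_mem (one_mem _) (mul_mem (natCast_mem _ _) h1)

theorem stmt3_general (d : ℕ) :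
    ∃ R : MvPolynomial (Fin 2) ℤ,
      (∀ m, 0 ≤ R.coeff m) ∧ F d = MvPolynomial.aeval ![e1, e2] R := by
  have hle : e1e2Closure ≤ (nonnegCoeffs (Fin 2) ℤ).map (aeval ![e1, e2]).toRingHom := by
    rw [e1e2Closure, Subsemiring.closure_le, Set.insert_subset_iff, Set.singleton_subset_iff]
    exact ⟨⟨X 0, X_mem_nonnegCoeffs 0, by simp⟩, ⟨X 1, X_mem_nonnegCoeffs 1, by simp⟩⟩
  obtain ⟨R, hR, hRF⟩ := hle (F_mem_e1e2Closure d)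
  exact ⟨R, hR, hRF.symm⟩

/-- The total Chern class of `Sym^d` of a rank-2 bundle is a polynomial with
nonnegative integer coefficients in `c₁` and `c₂`. -/
theorem stmt3 (d : ℕ) (hd : 1 ≤ d) :
    ∃ R : MvPolynomial (Fin 2) ℤ,
      (∀ m, 0 ≤ R.coeff m) ∧ F d = MvPolynomial.aeval ![e1, e2] R :=
  stmt3_general d
end

section
/- Let d ≥ 1 be a natural number and let F_d := ∏_{i=0}^{d} (1 + (d−i)·X + i·Y) in ℤ[X,Y]. Then there exists a two-variable polynomial P ∈ ℤ[S,T] all of whose coefficients are nonnegative and whose coefficient on the monomial S^{d−1} is strictly positive, such that the homogeneous component of degree d+1 of F_d (with X and Y each of degree 1) equals (X·Y)·P(e₁, e₂), where e₁ = X+Y and e₂ = X·Y. In Chern-class terms: the top Chern class c_{d+1}(Sym^d) of a rank-2 bundle equals c₂ times a polynomial in c₁, c₂ with nonnegative coefficients in which the monomial c₁^{d−1} occurs with positive coefficient. -/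
open MvPolynomial Finset

/-!
The degree-`(d+1)` part of `∏ᵢ (1 + Lᵢ)`, a product of `d + 1` factors with `Lᵢ = (d-i)X + iY`
linear, is `∏ᵢ Lᵢ`. The outer factors give `d²·XY`, and the remaining ones pair off as
`Lᵢ·L_{d-i} = i(d-i)·e₁² + (d-2i)²·e₂`, leaving the single factor `(d/2)·e₁` when `d` is even.
Each of these is a polynomial in `e₁, e₂` with nonnegative coefficients and a positive coefficient
on its pure power of `e₁`, and both properties survive multiplication.
-/

section Homogeneous

variable {σ R ι : Type*} [CommSemiring R]

attribute [local instance] MvPolynomial.gradedAlgebra in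
theorem homogeneousComponent_mul_of_isHomogeneous {k : ℕ} {L : MvPolynomial σ R}
    (hL : L.IsHomogeneous k) (n : ℕ) (p : MvPolynomial σ R) :
    homogeneousComponent (k + n) (L * p) = L * homogeneousComponent n p := by
  have := DirectSum.coe_decompose_mul_of_left_mem_of_le (homogeneousSubmodule σ R) (b := p)
    ((mem_homogeneousSubmodule k L).mpr hL) (Nat.le_add_right k n)
  rw [Nat.add_sub_cancel_left] at this
  rwa [← decomposition.decompose'_apply, ← decomposition.decompose'_apply]

theorem totalDegree_prod_one_add_le (s : Finset ι) (L : ι → MvPolynomial σ R)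
    (hL : ∀ i ∈ s, (L i).IsHomogeneous 1) :
    (∏ i ∈ s, (1 + L i)).totalDegree ≤ #s := by
  calc (∏ i ∈ s, (1 + L i)).totalDegree ≤ ∑ i ∈ s, (1 + L i).totalDegree :=
        totalDegree_finsetProd s _
    _ ≤ ∑ _i ∈ s, 1 := sum_le_sum fun i hi => (totalDegree_add _ _).trans <|
        max_le (by simp) (hL i hi).totalDegree_le
    _ = #s := by simp

theorem homogeneousComponent_card_prod_one_add (s : Finset ι) (L : ι → MvPolynomial σ R)
    (hL : ∀ i ∈ s, (L i).IsHomogeneous 1) :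
    homogeneousComponent #s (∏ i ∈ s, (1 + L i)) = ∏ i ∈ s, L i := by
  classical
  induction s using Finset.cons_induction with
  | empty => simp [homogeneousComponent_zero]
  | cons a s ha ih =>
    have hLs : ∀ i ∈ s, (L i).IsHomogeneous 1 := fun i hi => hL i (mem_cons_of_mem hi)
    rw [prod_cons, prod_cons, card_cons, add_mul, one_mul, map_add, add_comm #s 1,
      homogeneousComponent_mul_of_isHomogeneous (hL a (mem_cons_self a s)), ih hLs,
      homogeneousComponent_eq_zero _ _ (by have := totalDegree_prod_one_add_le s L hLs; omega),
      zero_add]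

end Homogeneous

noncomputable def linearForm (u v : ℤ) : MvPolynomial (Fin 2) ℤ := C u * Xp + C v * Yp

theorem isHomogeneous_linearForm (u v : ℤ) : (linearForm u v).IsHomogeneous 1 :=
  (isHomogeneous_C_mul_X u 0).add (isHomogeneous_C_mul_X v 1)

theorem homogeneousComponent_F (d : ℕ) :
    homogeneousComponent (d + 1) (F d) = ∏ i ∈ range (d + 1), linearForm (d - i) i := by
  simpa [F, linearForm, add_assoc] using homogeneousComponent_card_prod_one_add (range (d + 1))
    (fun i => linearForm (d - i) i) fun i _ => isHomogeneous_linearForm _ _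

theorem linearForm_mul_linearForm_swap_eq_aeval (u v : ℤ) :
    linearForm u v * linearForm v u =
      aeval ![e1, e2] (C (u * v) * X 0 ^ 2 + C ((u - v) ^ 2) * X 1) := by
  simp only [linearForm, e1, e2, map_add, map_sub, map_mul, map_pow, aeval_C, aeval_X,
    algebraMap_eq, Matrix.cons_val_zero, Matrix.cons_val_one]
  ring

def HasNonnegExpansion (n : ℕ) (f : MvPolynomial (Fin 2) ℤ) : Prop :=
  ∃ P : MvPolynomial (Fin 2) ℤ, (∀ m, 0 ≤ P.coeff m) ∧ 0 < P.coeff (Finsupp.single 0 n) ∧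
    f = aeval ![e1, e2] P

namespace HasNonnegExpansion

theorem C_of_pos {c : ℤ} (hc : 0 < c) : HasNonnegExpansion 0 (C c) :=
  ⟨C c, fun m => by rw [coeff_C]; split_ifs <;> omega,
    by rwa [Finsupp.single_zero, coeff_C, if_pos rfl], (aeval_C _ c).symm⟩

theorem mul {a b : ℕ} {f g : MvPolynomial (Fin 2) ℤ} (hf : HasNonnegExpansion a f)
    (hg : HasNonnegExpansion b g) : HasNonnegExpansion (a + b) (f * g) := by
  obtain ⟨P, hP, hPa, rfl⟩ := hf
  obtain ⟨Q, hQ, hQb, rfl⟩ := hg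
  refine ⟨P * Q, fun m => ?_, ?_, (map_mul _ _ _).symm⟩
  · rw [coeff_mul]
    exact sum_nonneg fun x _ => mul_nonneg (hP _) (hQ _)
  · rw [coeff_mul]
    refine sum_pos' (fun x _ => mul_nonneg (hP _) (hQ _))
      ⟨(Finsupp.single 0 a, Finsupp.single 0 b), ?_, mul_pos hPa hQb⟩
    rw [HasAntidiagonal.mem_antidiagonal, Finsupp.single_add]

theorem linearForm_self {u : ℤ} (hu : 0 < u) : HasNonnegExpansion 1 (linearForm u u) := by
  refine ⟨C u * X 0, fun m => ?_, by rwa [coeff_C_mul, coeff_X_same, mul_one], ?_⟩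
  · rw [coeff_C_mul, coeff_X]
    split_ifs <;> omega
  · simp only [linearForm, e1, map_mul, aeval_C, aeval_X, algebraMap_eq, Matrix.cons_val_zero]
    ring

theorem linearForm_mul_linearForm_swap {u v : ℤ} (hu : 0 < u) (hv : 0 < v) :
    HasNonnegExpansion 2 (linearForm u v * linearForm v u) := by
  refine ⟨_, fun m => ?_, ?_, linearForm_mul_linearForm_swap_eq_aeval u v⟩
  · rw [coeff_add, coeff_C_mul, coeff_C_mul, coeff_X, coeff_X_pow]
    split_ifs <;> positivity
  · rw [coeff_add, coeff_C_mul, coeff_C_mul, coeff_X, coeff_X_pow, if_pos rfl, if_neg]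
    · simpa using mul_pos hu hv
    · simp [Finsupp.single_eq_single_iff]

end HasNonnegExpansion

theorem hasNonnegExpansion_prod_linearForm :
    ∀ (n : ℕ) {a : ℤ}, 0 < a →
      HasNonnegExpansion n (∏ k ∈ range n, linearForm (a + n - 1 - k) (a + k))
  | 0, _, _ => by simpa using HasNonnegExpansion.C_of_pos one_pos
  | 1, a, ha => by simpa using HasNonnegExpansion.linearForm_self ha
  | n + 2, a, ha => by
    have outer := HasNonnegExpansion.linearForm_mul_linearForm_swap ha (v := a + n + 1) (by omega)
    have inner := hasNonnegExpansion_prod_linearForm n (a := a + 1) (by omega)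
    rw [prod_range_succ', prod_range_succ, mul_rotate, add_comm n 2]
    convert outer.mul inner using 4 <;> push_cast <;> ring

/-- The top Chern class `c_{d+1}(Sym^d)` of a rank-2 bundle equals `c₂` times a
polynomial `P` in `c₁, c₂` with nonnegative coefficients, in which the monomial
`c₁^{d−1}` (i.e. `S^{d−1}`, `S` being the first variable) occurs with strictly
positive coefficient. -/
theorem stmt5 (d : ℕ) (hd : 1 ≤ d) :
    ∃ P : MvPolynomial (Fin 2) ℤ,
      (∀ m, 0 ≤ P.coeff m) ∧
      0 < P.coeff (Finsupp.single (0 : Fin 2) (d - 1)) ∧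
      MvPolynomial.homogeneousComponent (d + 1) (F d) =
        e2 * MvPolynomial.aeval ![e1, e2] P := by
  obtain ⟨n, rfl⟩ : ∃ n, d = n + 1 := ⟨d - 1, by omega⟩
  obtain ⟨P, hP, hPpos, hPeval⟩ := (HasNonnegExpansion.C_of_pos (c := ((n + 1 : ℕ) : ℤ) ^ 2)
    (by positivity)).mul (hasNonnegExpansion_prod_linearForm n one_pos)
  refine ⟨P, hP, by simpa using hPpos, ?_⟩
  have middle : ∏ k ∈ range n, linearForm ((n + 1 : ℕ) - (k + 1 : ℕ)) (k + 1 : ℕ) =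
      ∏ k ∈ range n, linearForm (1 + n - 1 - k) (1 + k) :=
    prod_congr rfl fun k _ => by push_cast; ring_nf
  have first : linearForm ((n + 1 : ℕ) - (0 : ℕ)) (0 : ℕ) = C ((n + 1 : ℕ) : ℤ) * Xp := by
    simp [linearForm]
  have last : linearForm ((n + 1 : ℕ) - (n + 1 : ℕ)) (n + 1 : ℕ) = C ((n + 1 : ℕ) : ℤ) * Yp := by
    simp [linearForm]
  rw [homogeneousComponent_F, ← hPeval, prod_range_succ', prod_range_succ, middle, first, last,
    map_pow, e2]
  ring
end
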